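/- If a reversible graph-walking automaton with m states exists recognizing a set of graphs L, then there exists a returning and halting graph-walking automaton with m+1 states recognizing L. Consequently, any lower bound N on the size of returning-and-halting automata for L implies the lower bound N-1 on the size of reversible automata for L. -/

import Mathlib

attribute [local instance 10] Classical.propDecidable

/-- A signature: directions with an involutive opposite, node labels,
initial labels, and the set of directions allowed at each label. -/
structure Signature where
  Dir : Type
  neg : Dir → Dir
  neg_neg : ∀ d, neg (neg d) = d
  Lab : Type
  isInit : Lab → Bool
  dirs : Lab → Set Dir

/-- A finite graph over a signature. -/
structure SGraph (S : Signature) where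
  V : Type
  fin : Finite V
  v0 : V
  lab : V → S.Lab
  move : V → S.Dir → Option V
  move_inv : ∀ v d w, move v d = some w → move w (S.neg d) = some v
  move_defined : ∀ v d, (move v d).isSome ↔ d ∈ S.dirs (lab v)
  init_iff : ∀ v, S.isInit (lab v) = true ↔ v = v0

/-- A deterministic graph-walking automaton over a signature. -/
structure GWA (S : Signature) where
  Q : Type
  finQ : Finite Q
  q0 : Q
  F : Q → S.Lab → Bool
  δ : Q → S.Lab → Option (Q × S.Dir)
  δ_dir : ∀ q a p d, δ q a = some (p, d) → d ∈ S.dirs a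
  δ_not_F : ∀ q a, F q a = true → δ q a = none

namespace GWA

variable {S : Signature}

/-- One step of the computation, over an abstract node set with a move
function and a labelling. -/
def stepOn (A : GWA S) {V : Type} (move : V → S.Dir → Option V) (lab : V → S.Lab) :
    A.Q × V → Option (A.Q × V) := fun c =>
  if A.F c.1 (lab c.2) = true then none
  else match A.δ c.1 (lab c.2) with
    | none => none
    | some (p, d) => (move c.2 d).map fun w => (p, w)

/-- The configuration after `t` steps, starting from configuration `c`. -/
def runOn (A : GWA S) {V : Type} (move : V → S.Dir → Option V) (lab : V → S.Lab)
    (c : A.Q × V) : ℕ → Option (A.Q × V)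
  | 0 => some c
  | n + 1 => (runOn A move lab c n).bind (A.stepOn move lab)

def runFrom (A : GWA S) (G : SGraph S) (c : A.Q × G.V) : ℕ → Option (A.Q × G.V) :=
  A.runOn G.move G.lab c

/-- The computation of `A` on `G`, from the initial configuration. -/
def run (A : GWA S) (G : SGraph S) : ℕ → Option (A.Q × G.V) :=
  A.runFrom G (A.q0, G.v0)

def stateAt (A : GWA S) (G : SGraph S) (c : A.Q × G.V) (t : ℕ) : Option A.Q :=
  (A.runFrom G c t).map Prod.fst

def nodeAt (A : GWA S) (G : SGraph S) (c : A.Q × G.V) (t : ℕ) : Option G.V :=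
  (A.runFrom G c t).map Prod.snd

/-- The direction used by the transition taken at time `t`. -/
def dirAt (A : GWA S) (G : SGraph S) (c : A.Q × G.V) (t : ℕ) : Option S.Dir :=
  (A.runFrom G c t).bind fun x => (A.δ x.1 (G.lab x.2)).map Prod.snd

def Accepts (A : GWA S) (G : SGraph S) : Prop :=
  ∃ n c, A.run G n = some c ∧ A.F c.1 (G.lab c.2) = true

/-- A GWA is returning if it can accept only at the initial node. -/
def Returning (A : GWA S) : Prop :=
  ∀ q a, A.F q a = true → S.isInit a = true

/-- A GWA is halting if its computation on every (finite) graph is finite. -/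
def Halting (A : GWA S) : Prop :=
  ∀ G : SGraph S, ∃ n, A.run G n = none

/-- Direction-determinate: every state is entered in a unique direction. -/
def DirDet (A : GWA S) (d : A.Q → S.Dir) : Prop :=
  ∀ p a q d', A.δ p a = some (q, d') → d' = d q

/-- Backward determinism of the transition function. -/
def BackDet (A : GWA S) (d : A.Q → S.Dir) : Prop :=
  ∀ a q p1 p2, A.δ p1 a = some (q, d q) → A.δ p2 a = some (q, d q) → p1 = p2

/-- A reversible graph-walking automaton. -/
def Reversible (A : GWA S) : Prop :=
  (∃ d : A.Q → S.Dir, A.DirDet d ∧ A.BackDet d) ∧ A.Returning ∧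
    ∀ a q1 q2, A.F q1 a = true → A.F q2 a = true → q1 = q2

/-- The state `q` is entered via a transition in direction `d` taken during
the computation of `A` on `G`. -/
def EnteredVia (A : GWA S) (G : SGraph S) (d : S.Dir) (q : A.Q) : Prop :=
  ∃ t c, A.run G t = some c ∧ A.δ c.1 (G.lab c.2) = some (q, d)

end GWA

/-!
The step function of a reversible automaton is injective on configurations, so a computation
that runs forever on a finite graph must come back to its initial configuration `(q₀, v₀)`.
Starting from a fresh state that behaves like `q₀` but is never re-entered, the new automaton
recognizes this return as the state `q₀` at the initial node and halts there, rejecting. A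
computation that stops (in particular, one that accepts) is not periodic and so never returns
to `(q₀, v₀)`; along it the new automaton simply follows the old one.
-/

namespace GWA

variable {S : Signature}

section Run

variable (A : GWA S)

theorem runOn_add {V : Type} (move : V → S.Dir → Option V) (lab : V → S.Lab)
    (c : A.Q × V) (m n : ℕ) :
    A.runOn move lab c (m + n) = (A.runOn move lab c m).bind fun c' => A.runOn move lab c' n := by
  induction n with
  | zero => cases A.runOn move lab c m <;> rfl
  | succ n ih => rw [← Nat.add_assoc, runOn, ih, Option.bind_assoc]; rfl

theorem stepOn_eq_some_iff {V : Type} (move : V → S.Dir → Option V) (lab : V → S.Lab)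
    (c c' : A.Q × V) :
    A.stepOn move lab c = some c' ↔
      ∃ d, A.δ c.1 (lab c.2) = some (c'.1, d) ∧ move c.2 d = some c'.2 := by
  unfold stepOn
  by_cases hF : A.F c.1 (lab c.2) = true
  · simp [hF, A.δ_not_F _ _ hF]
  rw [if_neg hF]
  rcases A.δ c.1 (lab c.2) with _ | ⟨p, d⟩
  · simp
  · rcases c' with ⟨q, w⟩
    simp [Option.map_eq_some_iff, and_comm, eq_comm]

variable (G : SGraph S)

theorem run_succ (t : ℕ) : A.run G (t + 1) = (A.run G t).bind (A.stepOn G.move G.lab) := rfl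

theorem run_add (m n : ℕ) :
    A.run G (m + n) = (A.run G m).bind fun c => A.runFrom G c n :=
  A.runOn_add G.move G.lab _ m n

theorem run_eq_none_of_le {m n : ℕ} (hm : A.run G m = none) (hmn : m ≤ n) :
    A.run G n = none := by
  obtain ⟨k, rfl⟩ := Nat.exists_eq_add_of_le hmn
  rw [run_add, hm]
  rfl

theorem run_succ_eq_none_of_F {t : ℕ} {c : A.Q × G.V} (ht : A.run G t = some c)
    (hF : A.F c.1 (G.lab c.2) = true) : A.run G (t + 1) = none := by
  rw [run_succ, ht, Option.bind_some, stepOn, if_pos hF]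

theorem eq_initial_iff (c : A.Q × G.V) :
    c = (A.q0, G.v0) ↔ c.1 = A.q0 ∧ S.isInit (G.lab c.2) = true := by
  rw [G.init_iff, Prod.ext_iff]

theorem run_add_of_run_eq_initial {s : ℕ} (hs : A.run G s = some (A.q0, G.v0)) (t : ℕ) :
    A.run G (s + t) = A.run G t := by
  rw [run_add, hs]
  rfl

theorem run_mul_of_run_eq_initial {s : ℕ} (hs : A.run G s = some (A.q0, G.v0)) (k : ℕ) :
    A.run G (s * k) = some (A.q0, G.v0) := by
  induction k with
  | zero => rfl
  | succ k ih => rw [Nat.mul_succ, Nat.add_comm, A.run_add_of_run_eq_initial G hs, ih]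

def ReturnsBy (t : ℕ) : Prop :=
  ∃ s, 0 < s ∧ s ≤ t ∧ A.run G s = some (A.q0, G.v0)

theorem returnsBy_succ (t : ℕ) :
    A.ReturnsBy G (t + 1) ↔ A.ReturnsBy G t ∨ A.run G (t + 1) = some (A.q0, G.v0) := by
  constructor
  · rintro ⟨s, hs, hst, hrun⟩
    rcases Nat.lt_or_eq_of_le hst with hst | rfl
    · exact Or.inl ⟨s, hs, Nat.le_of_lt_succ hst, hrun⟩
    · exact Or.inr hrun
  · rintro (⟨s, hs, hst, hrun⟩ | hrun)
    · exact ⟨s, hs, Nat.le_succ_of_le hst, hrun⟩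
    · exact ⟨t + 1, Nat.succ_pos t, le_rfl, hrun⟩

/-- A computation that returns to its initial configuration is periodic, hence never stops. -/
theorem not_returnsBy_of_run_eq_none {n : ℕ} (hn : A.run G n = none) (t : ℕ) :
    ¬ A.ReturnsBy G t := by
  rintro ⟨s, hs, -, hrun⟩
  have := A.run_eq_none_of_le G hn (Nat.le_mul_of_pos_left n hs)
  rw [A.run_mul_of_run_eq_initial G hrun] at this
  cases this

end Run

section Reversible

variable {A : GWA S} {d : A.Q → S.Dir} (G : SGraph S)

theorem stepOn_injective (hdd : A.DirDet d) (hbd : A.BackDet d) {c₁ c₂ c : A.Q × G.V}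
    (h₁ : A.stepOn G.move G.lab c₁ = some c) (h₂ : A.stepOn G.move G.lab c₂ = some c) :
    c₁ = c₂ := by
  obtain ⟨d₁, hδ₁, hmove₁⟩ := (A.stepOn_eq_some_iff _ _ _ _).1 h₁
  obtain ⟨d₂, hδ₂, hmove₂⟩ := (A.stepOn_eq_some_iff _ _ _ _).1 h₂
  obtain rfl := hdd _ _ _ _ hδ₁
  obtain rfl := hdd _ _ _ _ hδ₂
  have hnode : c₁.2 = c₂.2 :=
    Option.some.inj ((G.move_inv _ _ _ hmove₁).symm.trans (G.move_inv _ _ _ hmove₂))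
  refine Prod.ext (hbd (G.lab c₁.2) c.1 _ _ hδ₁ ?_) hnode
  rw [hnode]
  exact hδ₂

theorem run_eq_initial_of_run_eq (hdd : A.DirDet d) (hbd : A.BackDet d) {c : A.Q × G.V}
    (i k : ℕ) (hi : A.run G i = some c) (hik : A.run G (i + k) = some c) :
    A.run G k = some (A.q0, G.v0) := by
  induction i generalizing c with
  | zero => rw [Nat.zero_add] at hik; rw [hik, ← hi]; rfl
  | succ i ih =>
    rw [run_succ, Option.bind_eq_some_iff] at hi
    rw [Nat.add_right_comm, run_succ, Option.bind_eq_some_iff] at hik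
    obtain ⟨c₁, hrun₁, hstep₁⟩ := hi
    obtain ⟨c₂, hrun₂, hstep₂⟩ := hik
    obtain rfl := stepOn_injective G hdd hbd hstep₁ hstep₂
    exact ih hrun₁ hrun₂

/-- Pigeonhole on the finitely many configurations, then injectivity of the step function. -/
theorem returnsBy_of_forall_run_ne_none (hdd : A.DirDet d) (hbd : A.BackDet d)
    (hrun : ∀ n, A.run G n ≠ none) : ∃ t, A.ReturnsBy G t := by
  have := A.finQ
  have := G.fin
  choose f hf using fun n => Option.ne_none_iff_exists'.1 (hrun n)
  obtain ⟨i, j, hij, hfij⟩ := Finite.exists_ne_map_eq_of_infinite f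
  wlog hlt : i < j generalizing i j
  · exact this j i hij.symm hfij.symm (lt_of_le_of_ne (not_lt.1 hlt) hij.symm)
  obtain ⟨k, rfl⟩ := Nat.exists_eq_add_of_lt hlt
  refine ⟨k + 1, k + 1, Nat.succ_pos k, le_rfl, ?_⟩
  exact run_eq_initial_of_run_eq G hdd hbd i (k + 1) (hf i) (by rw [← Nat.add_assoc, hf, hfij])

end Reversible

section FreshInit

variable (A : GWA S)

/-- `A` with a fresh initial state `none`, which acts as `A.q0`; the original initial state
`some A.q0` rejects (by halting) at the initial node. -/
noncomputable def freshInit : GWA S where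
  Q := Option A.Q
  finQ := have := A.finQ; inferInstance
  q0 := none
  F q a := if q = some A.q0 ∧ S.isInit a = true then false else A.F (q.getD A.q0) a
  δ q a := if q = some A.q0 ∧ S.isInit a = true then none
    else (A.δ (q.getD A.q0) a).map (Prod.map some id)
  δ_dir q a p d h := by
    split_ifs at h
    obtain ⟨⟨p', d'⟩, h', he⟩ := Option.map_eq_some_iff.1 h
    cases he
    exact A.δ_dir _ _ _ _ h'
  δ_not_F q a h := by
    split_ifs at h ⊢
    rw [A.δ_not_F _ _ h]
    rfl

theorem card_freshInit : Nat.card A.freshInit.Q = Nat.card A.Q + 1 :=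
  have := A.finQ
  Finite.card_option

theorem freshInit_F_eq_true (q : Option A.Q) (a : S.Lab) :
    A.freshInit.F q a = true ↔
      ¬(q = some A.q0 ∧ S.isInit a = true) ∧ A.F (q.getD A.q0) a = true := by
  change (if _ then _ else _) = true ↔ _
  split_ifs with h <;> simp [h]

theorem freshInit_stepOn {V : Type} (move : V → S.Dir → Option V) (lab : V → S.Lab)
    (q : Option A.Q) (v : V) :
    A.freshInit.stepOn move lab (q, v) =
      if q = some A.q0 ∧ S.isInit (lab v) = true then none
      else (A.stepOn move lab (q.getD A.q0, v)).map (Prod.map some id) := by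
  by_cases hq : q = some A.q0 ∧ S.isInit (lab v) = true
  · simp [stepOn, freshInit, hq]
  simp only [stepOn, freshInit, if_neg hq]
  split_ifs
  · rfl
  rcases A.δ (q.getD A.q0) (lab v) with _ | ⟨p, d⟩
  · rfl
  · simp [Option.map_map, Function.comp_def]

theorem freshInit_run_succ (G : SGraph S) (t : ℕ) :
    A.freshInit.run G (t + 1) =
      if A.ReturnsBy G t then none else (A.run G (t + 1)).map (Prod.map some id) := by
  induction t with
  | zero =>
    have hnot : ¬ A.ReturnsBy G 0 := fun ⟨s, hs, hs0, _⟩ => by omega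
    rw [if_neg hnot, run_succ, run_succ]
    exact A.freshInit_stepOn G.move G.lab none G.v0
  | succ t ih =>
    rw [run_succ, ih]
    by_cases hret : A.ReturnsBy G t
    · rw [if_pos hret, if_pos ((A.returnsBy_succ G t).2 (Or.inl hret))]
      rfl
    rw [if_neg hret, run_succ A G (t + 1)]
    rcases hrun : A.run G (t + 1) with _ | c
    · split_ifs <;> rfl
    have hreturn : A.ReturnsBy G (t + 1) ↔ c.1 = A.q0 ∧ S.isInit (G.lab c.2) = true := by
      rw [returnsBy_succ, hrun, Option.some_inj, eq_initial_iff]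
      simp [hret]
    rw [hreturn, Option.map_some, Option.bind_some]
    refine (A.freshInit_stepOn G.move G.lab (some c.1) c.2).trans ?_
    simp only [Option.some_inj, Option.getD_some]
    congr

theorem freshInit_returning (hA : A.Returning) : A.freshInit.Returning :=
  fun q a h => hA _ a ((A.freshInit_F_eq_true q a).1 h).2

theorem freshInit_halting {d : A.Q → S.Dir} (hdd : A.DirDet d) (hbd : A.BackDet d) :
    A.freshInit.Halting := by
  intro G
  by_cases hstop : ∃ n, A.run G n = none
  · obtain ⟨n, hn⟩ := hstop
    cases n with
    | zero => cases hn
    | succ t => exact ⟨t + 1, by rw [freshInit_run_succ, hn, Option.map_none, ite_self]; rfl⟩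
  · obtain ⟨t, hret⟩ := returnsBy_of_forall_run_ne_none G hdd hbd (not_exists.1 hstop)
    exact ⟨t + 1, by rw [freshInit_run_succ, if_pos hret]; rfl⟩

theorem freshInit_accepts_iff (G : SGraph S) : A.freshInit.Accepts G ↔ A.Accepts G := by
  constructor
  · rintro ⟨n, c', hrun, hF⟩
    replace hF := (A.freshInit_F_eq_true _ _).1 hF
    cases n with
    | zero =>
      cases Option.some.inj hrun
      exact ⟨0, _, rfl, hF.2⟩
    | succ t =>
      rw [freshInit_run_succ] at hrun
      split_ifs at hrun
      obtain ⟨c, hc, rfl⟩ := Option.map_eq_some_iff.1 hrun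
      exact ⟨t + 1, c, hc, hF.2⟩
  · rintro ⟨n, c, hrun, hF⟩
    by_cases hc : c = (A.q0, G.v0)
    · subst hc
      exact ⟨0, _, rfl, (A.freshInit_F_eq_true _ _).2 ⟨fun h => Option.some_ne_none _ h.1.symm, hF⟩⟩
    cases n with
    | zero => exact absurd (Option.some.inj hrun).symm hc
    | succ t =>
      have hret := A.not_returnsBy_of_run_eq_none G (A.run_succ_eq_none_of_F G hrun hF) t
      refine ⟨t + 1, (some c.1, c.2), by rw [freshInit_run_succ, if_neg hret, hrun]; rfl, ?_⟩
      rw [eq_initial_iff] at hc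
      exact (A.freshInit_F_eq_true _ _).2 ⟨by simpa using hc, hF⟩

end FreshInit

end GWA

/-- from an m-state reversible GWA one obtains a returning and
halting GWA with m+1 states recognizing the same set of graphs; consequently
a lower bound N for returning-and-halting automata yields the lower bound
N - 1 for reversible automata. -/
theorem stmt6 (S : Signature) (A : GWA S) (m : ℕ) (hm : Nat.card A.Q = m)
    (hrev : A.Reversible) :
    (∃ B : GWA S, Nat.card B.Q = m + 1 ∧ B.Returning ∧ B.Halting ∧
      ∀ G : SGraph S, B.Accepts G ↔ A.Accepts G) ∧
    (∀ N : ℕ,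
      (∀ C : GWA S, C.Returning → C.Halting →
        (∀ G : SGraph S, C.Accepts G ↔ A.Accepts G) → N ≤ Nat.card C.Q) →
      N - 1 ≤ m) := by
  obtain ⟨⟨d, hdd, hbd⟩, hret, -⟩ := hrev
  have hB : ∃ B : GWA S, Nat.card B.Q = m + 1 ∧ B.Returning ∧ B.Halting ∧
      ∀ G : SGraph S, B.Accepts G ↔ A.Accepts G :=
    ⟨A.freshInit, by rw [GWA.card_freshInit, hm], A.freshInit_returning hret,
      A.freshInit_halting hdd hbd, A.freshInit_accepts_iff⟩
  refine ⟨hB, fun N hN => ?_⟩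
  obtain ⟨B, hcard, hBret, hBhalt, hBacc⟩ := hB
  have := hN B hBret hBhalt hBacc
  omega
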